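/- Let n ≥ 1, p > 2, δ₁, …, δ_n ≥ 0 and ε ∈ (0, 1). For ξ, ζ ∈ ℝⁿ set Q(ξ, ζ) = (p−1)·∑_{i=1}^n (|ξ_i| − δ_i)₊^{p−2}·ζ_i² + ε·(1 + |ξ|²)^{(p−2)/2}·|ζ|² + ε·(p−2)·(1 + |ξ|²)^{(p−4)/2}·⟨ξ, ζ⟩². Then for every ξ, ζ ∈ ℝⁿ one has ε·(1 + |ξ|²)^{(p−2)/2}·|ζ|² ≤ Q(ξ, ζ) ≤ (1 + ε)·(p−1)·(1 + |ξ|²)^{(p−2)/2}·|ζ|². -/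

import Mathlib

/-! Both bounds are termwise. The orthotropic coefficients satisfy
`0 ≤ (|ξᵢ| − δᵢ)₊^{p−2} ≤ |ξ|^{p−2} ≤ (1 + |ξ|²)^{(p−2)/2}`, and by Cauchy–Schwarz
`(1 + |ξ|²)^{(p−4)/2} ⟨ξ, ζ⟩² ≤ (1 + |ξ|²)^{(p−2)/2} |ζ|²`. Dropping the nonnegative terms gives
the lower bound; bounding all three terms by multiples of `(1 + |ξ|²)^{(p−2)/2} |ζ|²` gives
`(p − 1) + ε + ε(p − 2) = (1 + ε)(p − 1)` times it, the upper bound. -/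

/-- The quadratic form `⟨D²F_ε(ξ)ζ, ζ⟩` associated with the regularized orthotropic
integrand `F_ε(ξ) = ∑ᵢ (1/p)(|ξᵢ| − δᵢ)₊^p + (ε/p)(1 + |ξ|²)^{p/2}`. -/
noncomputable def Qform (n : ℕ) (p ε : ℝ) (δ : Fin n → ℝ)
    (ξ ζ : EuclideanSpace ℝ (Fin n)) : ℝ :=
  (p - 1) * ∑ i, (max (|ξ i| - δ i) 0) ^ (p - 2) * ζ i ^ 2
    + ε * (1 + ‖ξ‖ ^ 2) ^ ((p - 2) / 2) * ‖ζ‖ ^ 2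
    + ε * (p - 2) * (1 + ‖ξ‖ ^ 2) ^ ((p - 4) / 2) * (inner ℝ ξ ζ : ℝ) ^ 2

open Finset

theorem Real.rpow_le_one_add_sq_rpow_half {a r q : ℝ} (ha : 0 ≤ a) (har : a ≤ r) (hq : 0 ≤ q) :
    a ^ q ≤ (1 + r ^ 2) ^ (q / 2) := by
  have hsq : a ^ 2 ≤ 1 + r ^ 2 := by nlinarith
  calc a ^ q = (a ^ 2) ^ (q / 2) := by
        rw [← Real.rpow_natCast, ← Real.rpow_mul ha]; ring_nf
    _ ≤ (1 + r ^ 2) ^ (q / 2) := by gcongr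

theorem real_inner_sq_le_norm_sq_mul_norm_sq {E : Type*} [NormedAddCommGroup E]
    [InnerProductSpace ℝ E] (x y : E) : inner ℝ x y ^ 2 ≤ ‖x‖ ^ 2 * ‖y‖ ^ 2 := by
  rw [← mul_pow]
  exact sq_le_sq.mpr ((abs_real_inner_le_norm x y).trans (le_abs_self _))

theorem one_add_norm_sq_rpow_mul_inner_sq_le {E : Type*} [NormedAddCommGroup E]
    [InnerProductSpace ℝ E] (p : ℝ) (x y : E) :
    (1 + ‖x‖ ^ 2) ^ ((p - 4) / 2) * inner ℝ x y ^ 2 ≤ (1 + ‖x‖ ^ 2) ^ ((p - 2) / 2) * ‖y‖ ^ 2 := by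
  have hpos : (0 : ℝ) < 1 + ‖x‖ ^ 2 := by positivity
  have hsplit : (1 + ‖x‖ ^ 2) ^ ((p - 2) / 2) = (1 + ‖x‖ ^ 2) ^ ((p - 4) / 2) * (1 + ‖x‖ ^ 2) := by
    rw [← Real.rpow_add_one hpos.ne']; ring_nf
  have hcs : inner ℝ x y ^ 2 ≤ (1 + ‖x‖ ^ 2) * ‖y‖ ^ 2 := by
    nlinarith [real_inner_sq_le_norm_sq_mul_norm_sq x y, sq_nonneg ‖y‖]
  rw [hsplit, mul_assoc]
  gcongr

theorem sum_max_abs_sub_rpow_mul_sq_nonneg {ι : Type*} [Fintype ι] (q : ℝ) (δ : ι → ℝ)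
    (ξ ζ : EuclideanSpace ℝ ι) : 0 ≤ ∑ i, (max (|ξ i| - δ i) 0) ^ q * ζ i ^ 2 :=
  sum_nonneg fun _ _ => mul_nonneg (Real.rpow_nonneg (le_max_right _ _) q) (sq_nonneg _)

theorem sum_max_abs_sub_rpow_mul_sq_le {ι : Type*} [Fintype ι] {q : ℝ} {δ : ι → ℝ}
    (hq : 0 ≤ q) (hδ : ∀ i, 0 ≤ δ i) (ξ ζ : EuclideanSpace ℝ ι) :
    ∑ i, (max (|ξ i| - δ i) 0) ^ q * ζ i ^ 2 ≤ (1 + ‖ξ‖ ^ 2) ^ (q / 2) * ‖ζ‖ ^ 2 := by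
  rw [EuclideanSpace.real_norm_sq_eq ζ, mul_sum]
  refine sum_le_sum fun i _ => mul_le_mul_of_nonneg_right ?_ (sq_nonneg _)
  have hcoord : |ξ i| ≤ ‖ξ‖ := by simpa using PiLp.norm_apply_le ξ i
  exact Real.rpow_le_one_add_sq_rpow_half (le_max_right _ _)
    (max_le (by linarith [hδ i]) (norm_nonneg ξ)) hq

theorem stmt3_general (n : ℕ) (p : ℝ) (hp : 2 < p) (δ : Fin n → ℝ)
    (hδ : ∀ i, 0 ≤ δ i) (ε : ℝ) (hε : ε ∈ Set.Ioo (0:ℝ) 1)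
    (ξ ζ : EuclideanSpace ℝ (Fin n)) :
    ε * (1 + ‖ξ‖ ^ 2) ^ ((p - 2) / 2) * ‖ζ‖ ^ 2 ≤ Qform n p ε δ ξ ζ ∧
      Qform n p ε δ ξ ζ ≤ (1 + ε) * (p - 1) * (1 + ‖ξ‖ ^ 2) ^ ((p - 2) / 2) * ‖ζ‖ ^ 2 := by
  have hε₀ : 0 ≤ ε := hε.1.le
  have hp₂ : 0 ≤ p - 2 := by linarith
  have hS₀ := sum_max_abs_sub_rpow_mul_sq_nonneg (p - 2) δ ξ ζ
  have hS := sum_max_abs_sub_rpow_mul_sq_le hp₂ hδ ξ ζ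
  have hC := one_add_norm_sq_rpow_mul_inner_sq_le p ξ ζ
  have hC₀ : 0 ≤ (1 + ‖ξ‖ ^ 2) ^ ((p - 4) / 2) * inner ℝ ξ ζ ^ 2 := by positivity
  unfold Qform
  constructor
  · nlinarith [mul_nonneg (mul_nonneg hε₀ hp₂) hC₀]
  · nlinarith [mul_le_mul_of_nonneg_left hC (mul_nonneg hε₀ hp₂)]

/-- Let `n ≥ 1`, `p > 2`, `δ₁, …, δ_n ≥ 0` and `ε ∈ (0, 1)`. Then for every
`ξ, ζ ∈ ℝⁿ` one has
`ε·(1 + |ξ|²)^{(p−2)/2}·|ζ|² ≤ Q(ξ, ζ) ≤ (1 + ε)·(p−1)·(1 + |ξ|²)^{(p−2)/2}·|ζ|²`. -/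
theorem stmt3 (n : ℕ) (hn : 1 ≤ n) (p : ℝ) (hp : 2 < p) (δ : Fin n → ℝ)
    (hδ : ∀ i, 0 ≤ δ i) (ε : ℝ) (hε : ε ∈ Set.Ioo (0:ℝ) 1)
    (ξ ζ : EuclideanSpace ℝ (Fin n)) :
    ε * (1 + ‖ξ‖ ^ 2) ^ ((p - 2) / 2) * ‖ζ‖ ^ 2 ≤ Qform n p ε δ ξ ζ ∧
      Qform n p ε δ ξ ζ ≤ (1 + ε) * (p - 1) * (1 + ‖ξ‖ ^ 2) ^ ((p - 2) / 2) * ‖ζ‖ ^ 2 :=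
  stmt3_general n p hp δ hδ ε hε ξ ζ
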